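/- Suppose min_{j∈J} T_j > 1. Then no nonnegative solution of the within-host bacterial dynamics system whose total bacterial population N(0) = N_s(0)+N_m(0)+N_p(0)+N_{m.p}(0) is positive can converge to the bacteria-free stationary state E⁰ = (B₀, 0, 0, 0, 0) as t → ∞; that is, the stable set of {E⁰} contains no point with positive total bacterial population. -/

import Mathlib

open Filter Set Matrix

/-- Parameters of the within-host bacterial dynamics system:
`Lam` = Λ (nutrient inflow), `d` = nutrient washout rate, `ds,dm,dp,dmp` = death
rates `d_j`, `bs,bm,bp,bmp` = consumption rates `β_j`, `ts,tm,tp,tmp` = conversion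
factors `τ_j`, `es,em,ep,emp` = mutation ratios `ε_j`, `th` = segregation ratio θ,
`al` = HGT flux α, and `aH, bH` the Beddington–DeAngelis constants. -/
structure ModelParams where
  Lam : ℝ
  d : ℝ
  ds : ℝ
  dm : ℝ
  dp : ℝ
  dmp : ℝ
  bs : ℝ
  bm : ℝ
  bp : ℝ
  bmp : ℝ
  ts : ℝ
  tm : ℝ
  tp : ℝ
  tmp : ℝ
  es : ℝ
  em : ℝ
  ep : ℝ
  emp : ℝ
  th : ℝ
  al : ℝ
  aH : ℝ
  bH : ℝ

/-- Right-hand side of the ODE system, with state `x = (B, N_s, N_m, N_p, N_{m.p})`. -/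
noncomputable def rhs (p : ModelParams) (x : Fin 5 → ℝ) : Fin 5 → ℝ :=
  ![p.Lam - p.d * x 0 - x 0 * (p.bs * x 1 + p.bm * x 2 + p.bp * x 3 + p.bmp * x 4),
    p.ts * p.bs * (1 - p.es) * x 0 * x 1 - p.ds * x 1 + p.em * p.tm * p.bm * x 0 * x 2
      + p.th * p.tp * p.bp * x 0 * x 3
      - (p.al / (p.aH + p.bH * (x 1 + x 2 + x 3 + x 4))) * x 1 * (x 3 + x 4),
    p.tm * p.bm * (1 - p.em) * x 0 * x 2 - p.dm * x 2 + p.es * p.ts * p.bs * x 0 * x 1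
      + p.th * p.tmp * p.bmp * x 0 * x 4
      - (p.al / (p.aH + p.bH * (x 1 + x 2 + x 3 + x 4))) * x 2 * (x 3 + x 4),
    p.tp * p.bp * (1 - p.th) * (1 - p.ep) * x 0 * x 3 - p.dp * x 3
      + p.emp * (1 - p.th) * p.tmp * p.bmp * x 0 * x 4
      + (p.al / (p.aH + p.bH * (x 1 + x 2 + x 3 + x 4))) * x 1 * (x 3 + x 4),
    p.tmp * p.bmp * (1 - p.th) * (1 - p.emp) * x 0 * x 4 - p.dmp * x 4
      + p.ep * (1 - p.th) * p.tp * p.bp * x 0 * x 3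
      + (p.al / (p.aH + p.bH * (x 1 + x 2 + x 3 + x 4))) * x 2 * (x 3 + x 4)]

/-- Natural hypotheses on the parameters. -/
def ModelParams.Valid (p : ModelParams) : Prop :=
  0 < p.Lam ∧ 0 < p.d ∧ 0 < p.ds ∧ 0 < p.dm ∧ 0 < p.dp ∧ 0 < p.dmp ∧
  0 ≤ p.bs ∧ 0 ≤ p.bm ∧ 0 ≤ p.bp ∧ 0 ≤ p.bmp ∧
  0 ≤ p.ts ∧ 0 ≤ p.tm ∧ 0 ≤ p.tp ∧ 0 ≤ p.tmp ∧
  p.es ∈ Set.Ioo (0:ℝ) 1 ∧ p.em ∈ Set.Ioo (0:ℝ) 1 ∧ p.ep ∈ Set.Ioo (0:ℝ) 1 ∧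
  p.emp ∈ Set.Ioo (0:ℝ) 1 ∧ p.th ∈ Set.Ioo (0:ℝ) 1 ∧
  0 ≤ p.al ∧ 0 ≤ p.aH ∧ 0 ≤ p.bH ∧ 0 < p.aH + p.bH

/-- `x : ℝ → Fin 5 → ℝ` is a global-in-time (for `t ≥ 0`) solution of the system. -/
noncomputable def IsSolution (p : ModelParams) (x : ℝ → Fin 5 → ℝ) : Prop :=
  ∀ t : ℝ, 0 ≤ t → ∀ i : Fin 5, HasDerivAt (fun s => x s i) (rhs p (x t) i) t

/-!
Mutation, segregation and horizontal gene transfer only move bacteria between strains, so the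
total population `N = N_s + N_m + N_p + N_{m.p}` obeys `N' = ∑ⱼ (τⱼ βⱼ B - dⱼ) Nⱼ`. Near `E⁰` every
coefficient is close to `dⱼ (Tⱼ - 1) > 0`, so along a solution converging to `E⁰` the total `N`
is nondecreasing from some time `T` on, and its limit `0` forces `N(T) ≤ 0`. On the other hand
`N' ≥ -(∑ⱼ dⱼ) N`, hence `N(T) ≥ N(0) e^{-(∑ⱼ dⱼ) T} > 0`.
-/

open Real Finset

theorem mul_exp_le_of_mul_le_deriv {f f' : ℝ → ℝ} {a c : ℝ}
    (hf : ∀ t ∈ Ici a, HasDerivAt f (f' t) t) (hf' : ∀ t ∈ Ici a, c * f t ≤ f' t)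
    {t : ℝ} (ht : a ≤ t) : f a * exp (c * (t - a)) ≤ f t := by
  set g : ℝ → ℝ := fun u => f u * exp (-(c * u))
  have hg : ∀ u ∈ Ici a, HasDerivAt g ((f' u - c * f u) * exp (-(c * u))) u := fun u hu => by
    have hexp : HasDerivAt (fun u => -(c * u)) (-c) u := by
      simpa using ((hasDerivAt_id u).const_mul c).fun_neg
    exact ((hf u hu).fun_mul hexp.exp).congr_deriv (by ring)
  have hmono : MonotoneOn g (Ici a) :=
    monotoneOn_of_hasDerivWithinAt_nonneg (convex_Ici a)
      (fun u hu => (hg u hu).continuousAt.continuousWithinAt)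
      (fun u hu => (hg u (interior_subset hu)).hasDerivWithinAt)
      (fun u hu => mul_nonneg (sub_nonneg.2 (hf' u (interior_subset hu))) (exp_pos _).le)
  calc f a * exp (c * (t - a)) = g a * exp (c * t) := by
        simp only [g, mul_assoc, ← exp_add]; ring_nf
    _ ≤ g t * exp (c * t) := by gcongr; exact hmono self_mem_Ici ht ht
    _ = f t := by simp only [g, mul_assoc, ← exp_add]; simp

theorem Filter.Tendsto.eventually_forall_mul_sub_nonneg {α ι : Type*} [Finite ι] {l : Filter α}
    {B : α → ℝ} {B0 : ℝ} (hB : Tendsto B l (nhds B0)) {g d : ι → ℝ} (h : ∀ j, d j < B0 * g j) :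
    ∀ᶠ t in l, ∀ j, 0 ≤ B t * g j - d j :=
  eventually_all.2 fun j =>
    (((hB.mul_const (g j)).sub_const (d j)).eventually_const_lt (sub_pos.2 (h j))).mono
      fun _ ht => ht.le

def totalPop (v : Fin 5 → ℝ) : ℝ := ∑ j : Fin 4, v j.succ

theorem continuous_totalPop : Continuous totalPop :=
  continuous_finsetSum _ fun j _ => continuous_apply j.succ

namespace ModelParams

variable (p : ModelParams)

-- Strain `j : Fin 4` (in the order s, m, p, m.p) is the state coordinate `j.succ`.
def growthCoeff : Fin 4 → ℝ := ![p.ts * p.bs, p.tm * p.bm, p.tp * p.bp, p.tmp * p.bmp]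

def deathRate : Fin 4 → ℝ := ![p.ds, p.dm, p.dp, p.dmp]

def netGrowth (v : Fin 5 → ℝ) : ℝ :=
  ∑ j : Fin 4, (v 0 * p.growthCoeff j - p.deathRate j) * v j.succ

theorem sum_rhs_succ (v : Fin 5 → ℝ) : ∑ j : Fin 4, rhs p v j.succ = p.netGrowth v := by
  simp only [netGrowth, growthCoeff, deathRate, Fin.sum_univ_four, rhs, Fin.isValue,
    Fin.succ_zero_eq_one, Fin.succ_one_eq_two, Fin.reduceSucc, cons_val_zero, cons_val_one,
    Matrix.cons_val]
  ring

variable {p}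

theorem netGrowth_nonneg {v : Fin 5 → ℝ} (hv : ∀ i, 0 ≤ v i)
    (hrate : ∀ j, 0 ≤ v 0 * p.growthCoeff j - p.deathRate j) : 0 ≤ p.netGrowth v :=
  sum_nonneg fun j _ => mul_nonneg (hrate j) (hv _)

theorem Valid.growthCoeff_nonneg (hp : p.Valid) (j : Fin 4) : 0 ≤ p.growthCoeff j := by
  obtain ⟨-, -, -, -, -, -, hbs, hbm, hbp, hbmp, hts, htm, htp, htmp, -⟩ := hp
  fin_cases j <;>
    simp only [growthCoeff, Fin.zero_eta, Fin.mk_one, Fin.reduceFinMk, Fin.isValue,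
      cons_val_zero, cons_val_one, Matrix.cons_val] <;>
    positivity

theorem Valid.deathRate_pos (hp : p.Valid) (j : Fin 4) : 0 < p.deathRate j := by
  obtain ⟨-, -, hds, hdm, hdp, hdmp, -⟩ := hp
  fin_cases j <;> simpa [deathRate]

theorem Valid.neg_mul_totalPop_le_netGrowth (hp : p.Valid) {v : Fin 5 → ℝ} (hv : ∀ i, 0 ≤ v i) :
    -(∑ j, p.deathRate j) * totalPop v ≤ p.netGrowth v := by
  rw [totalPop, mul_sum]
  refine sum_le_sum fun j _ => mul_le_mul_of_nonneg_right ?_ (hv _)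
  have hdj : p.deathRate j ≤ ∑ k, p.deathRate k :=
    single_le_sum (fun k _ => (hp.deathRate_pos k).le) (mem_univ j)
  nlinarith [mul_nonneg (hv 0) (hp.growthCoeff_nonneg j)]

theorem Valid.deathRate_lt_mul_growthCoeff (hp : p.Valid) {B0 : ℝ}
    (h : 1 < min (min (B0 * p.ts * p.bs / p.ds) (B0 * p.tm * p.bm / p.dm))
      (min (B0 * p.tp * p.bp / p.dp) (B0 * p.tmp * p.bmp / p.dmp))) (j : Fin 4) :
    p.deathRate j < B0 * p.growthCoeff j := by
  rw [← one_lt_div (hp.deathRate_pos j)]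
  simp only [lt_min_iff] at h
  fin_cases j <;>
    simp only [growthCoeff, deathRate, Fin.zero_eta, Fin.mk_one, Fin.reduceFinMk, Fin.isValue,
      cons_val_zero, cons_val_one, Matrix.cons_val, ← mul_assoc] <;>
    tauto

end ModelParams

open ModelParams

namespace IsSolution

variable {p : ModelParams} {x : ℝ → Fin 5 → ℝ}

theorem hasDerivAt_totalPop (hx : IsSolution p x) {t : ℝ} (ht : 0 ≤ t) :
    HasDerivAt (fun s => totalPop (x s)) (p.netGrowth (x t)) t := by
  rw [← sum_rhs_succ]
  exact HasDerivAt.fun_sum fun j _ => hx t ht j.succ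

theorem totalPop_pos (hx : IsSolution p x) (hp : p.Valid) (hnn : ∀ t : ℝ, 0 ≤ t → ∀ i, 0 ≤ x t i)
    (h0 : 0 < totalPop (x 0)) {t : ℝ} (ht : 0 ≤ t) : 0 < totalPop (x t) :=
  (mul_pos h0 (exp_pos _)).trans_le <|
    mul_exp_le_of_mul_le_deriv (fun _ hs => hx.hasDerivAt_totalPop hs)
      (fun s hs => hp.neg_mul_totalPop_le_netGrowth (hnn s hs)) ht

theorem totalPop_monotoneOn (hx : IsSolution p x) (hnn : ∀ t : ℝ, 0 ≤ t → ∀ i, 0 ≤ x t i)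
    {T : ℝ} (hT : 0 ≤ T) (hrate : ∀ t, T ≤ t → ∀ j, 0 ≤ x t 0 * p.growthCoeff j - p.deathRate j) :
    MonotoneOn (fun t => totalPop (x t)) (Ici T) :=
  monotoneOn_of_hasDerivWithinAt_nonneg (convex_Ici T)
    (fun _ ht => (hx.hasDerivAt_totalPop (hT.trans ht)).continuousAt.continuousWithinAt)
    (fun _ ht => (hx.hasDerivAt_totalPop (hT.trans (interior_subset ht))).hasDerivWithinAt)
    fun t ht => netGrowth_nonneg (hnn t (hT.trans (interior_subset ht)))
      (hrate t (interior_subset ht))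

end IsSolution

theorem stable_set_of_E0_avoids_X0_general
    (p : ModelParams) (hp : p.Valid)
    (B0 Tmin : ℝ)
    (hT : Tmin = min (min (B0 * p.ts * p.bs / p.ds) (B0 * p.tm * p.bm / p.dm))
                     (min (B0 * p.tp * p.bp / p.dp) (B0 * p.tmp * p.bmp / p.dmp)))
    (hTgt : 1 < Tmin)
    (x : ℝ → Fin 5 → ℝ) (hx : IsSolution p x)
    (hnn : ∀ t : ℝ, 0 ≤ t → ∀ i, 0 ≤ x t i)
    (hN0 : 0 < x 0 1 + x 0 2 + x 0 3 + x 0 4) :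
    ¬ Filter.Tendsto x Filter.atTop (nhds ![B0, 0, 0, 0, 0]) := by
  intro hlim
  have hB : Tendsto (fun t => x t 0) atTop (nhds B0) := tendsto_pi_nhds.1 hlim 0
  have hN : Tendsto (fun t => totalPop (x t)) atTop (nhds 0) := by
    have h := (continuous_totalPop.tendsto _).comp hlim
    rwa [show totalPop ![B0, 0, 0, 0, 0] = 0 by simp [totalPop, Fin.sum_univ_four]] at h
  obtain ⟨T, hlarge⟩ := eventually_atTop.1 <|
    (hB.eventually_forall_mul_sub_nonneg (hp.deathRate_lt_mul_growthCoeff (hT ▸ hTgt))).and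
      (eventually_ge_atTop 0)
  have hT0 : 0 ≤ T := (hlarge T le_rfl).2
  have hmono := hx.totalPop_monotoneOn hnn hT0 fun t ht => (hlarge t ht).1
  have hNT : totalPop (x T) ≤ 0 :=
    ge_of_tendsto hN (eventually_atTop.2 ⟨T, fun t ht => hmono self_mem_Ici ht ht⟩)
  have hNpos : 0 < totalPop (x 0) := by simpa [totalPop, Fin.sum_univ_four] using hN0
  exact (hx.totalPop_pos hp hnn hNpos hT0).not_ge hNT

/-- If `min_j T_j > 1`, then no nonnegative solution with
positive total initial bacterial population converges to the bacteria-free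
stationary state `E⁰ = (B₀,0,0,0,0)`: the stable set of `E⁰` contains no point
with positive total bacterial population. -/
theorem stable_set_of_E0_avoids_X0
    (p : ModelParams) (hp : p.Valid)
    (B0 Tmin : ℝ) (hB0 : B0 = p.Lam / p.d)
    (hT : Tmin = min (min (B0 * p.ts * p.bs / p.ds) (B0 * p.tm * p.bm / p.dm))
                     (min (B0 * p.tp * p.bp / p.dp) (B0 * p.tmp * p.bmp / p.dmp)))
    (hTgt : 1 < Tmin)
    (x : ℝ → Fin 5 → ℝ) (hx : IsSolution p x)
    (hnn : ∀ t : ℝ, 0 ≤ t → ∀ i, 0 ≤ x t i)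
    (hN0 : 0 < x 0 1 + x 0 2 + x 0 3 + x 0 4) :
    ¬ Filter.Tendsto x Filter.atTop (nhds ![B0, 0, 0, 0, 0]) :=
  stable_set_of_E0_avoids_X0_general p hp B0 Tmin hT hTgt x hx hnn hN0
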